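/- If there are infinitely many positive integers n such that 2n + 1 and 2n + 3 are both prime (i.e., if the twin prime conjecture holds), then there are infinitely many positive integers n such that the prime sum graph G_{2n} contains a Hamilton cycle. -/

import Mathlib

/-- The prime sum graph of order `m`: vertices are `{1, ..., m}`, and two distinct
vertices are adjacent iff their sum is prime. -/
def primeSumGraph (m : ℕ) : SimpleGraph (Finset.Icc 1 m) where
  Adj i j := i ≠ j ∧ Nat.Prime (i.1 + j.1)
  symm := by
    constructor
    rintro i j ⟨h1, h2⟩
    exact ⟨h1.symm, by rwa [Nat.add_comm]⟩
  loopless := by constructor; rintro i ⟨h, _⟩; exact h rfl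

/-!
When `2n + 1` and `2n + 3` are both prime, `1, 2n, 3, 2n - 2, 5, …, 2n - 1, 2` is a Hamilton
cycle of `G_{2n}`: the odd number `k` is followed by `2n + 1 - k`, which is followed by
`k + 2`, so consecutive sums alternate between `2n + 1` and `2n + 3`, and the closing edge
`2 + 1 = 3` is prime as well. Discarding the finitely many `n < 2` (where `G_{2n}` has too
few vertices) leaves infinitely many `n`.
-/

open Function

namespace SimpleGraph

variable {V : Type*} {G : SimpleGraph V}

theorem cycleGraph.isHamiltonianCycle_cycle (n : ℕ) : (cycleGraph.cycle n).IsHamiltonianCycle :=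
  Walk.isHamiltonianCycle_iff_isCycle_and_length_eq.mpr ⟨cycleGraph.isCycle_cycle, by simp⟩

def cycleGraph.homOfAdjAddOne {n : ℕ} (f : Fin (n + 2) → V)
    (hf : ∀ i, G.Adj (f i) (f (i + 1))) : cycleGraph (n + 2) →g G where
  toFun := f
  map_rel' {u v} huv := by
    rcases cycleGraph_adj.mp huv with h | h <;> obtain rfl := eq_add_of_sub_eq' h
    · exact (hf v).symm
    · exact hf u

theorem exists_isHamiltonianCycle_of_bijective [DecidableEq V] {n : ℕ} (f : Fin (n + 3) → V)
    (hf : Bijective f) (hadj : ∀ i, G.Adj (f i) (f (i + 1))) :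
    ∃ a, ∃ p : G.Walk a a, p.IsHamiltonianCycle :=
  ⟨_, (cycleGraph.cycle n).map (cycleGraph.homOfAdjAddOne f hadj),
    (cycleGraph.isHamiltonianCycle_cycle n).map (f := cycleGraph.homOfAdjAddOne f hadj) hf⟩

end SimpleGraph

/-- The `i`-th vertex of the cycle `1, 2n, 3, 2n - 2, 5, …, 2n - 1, 2`. -/
def zigzag (n i : ℕ) : ℕ := if i % 2 = 0 then i + 1 else 2 * n + 1 - i

theorem zigzag_mem_Icc {n i : ℕ} (hi : i < 2 * n) : zigzag n i ∈ Finset.Icc 1 (2 * n) := by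
  rw [Finset.mem_Icc, zigzag]
  split_ifs <;> omega

theorem zigzag_injOn (n : ℕ) : Set.InjOn (zigzag n) (Set.Iio (2 * n)) := by
  intro i hi j hj hij
  simp only [Set.mem_Iio, zigzag] at hi hj hij
  split_ifs at hij <;> omega

theorem zigzag_add_zigzag_succ {n i : ℕ} (hi : i + 1 < 2 * n) :
    zigzag n i + zigzag n (i + 1) = 2 * n + 1 + 2 * (i % 2) := by
  simp only [zigzag]
  split_ifs <;> omega

theorem zigzag_pred_add_zigzag_zero {n : ℕ} (hn : 1 ≤ n) :
    zigzag n (2 * n - 1) + zigzag n 0 = 3 := by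
  simp only [zigzag]
  split_ifs <;> omega

theorem primeSumGraph_adj_of_add_eq {m p : ℕ} {u v : Finset.Icc 1 m} (huv : u.1 + v.1 = p)
    (hp : p.Prime) (h2 : p ≠ 2) : (primeSumGraph m).Adj u v := by
  subst huv
  refine ⟨?_, hp⟩
  rintro rfl
  rw [← two_mul, Nat.prime_mul_iff] at hp
  omega

theorem primeSumGraph_exists_isHamiltonianCycle {n : ℕ} (hn : 2 ≤ n)
    (h1 : (2 * n + 1).Prime) (h3 : (2 * n + 3).Prime) :
    ∃ a, ∃ w : (primeSumGraph (2 * n)).Walk a a, w.IsHamiltonianCycle := by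
  obtain ⟨k, hk⟩ : ∃ k, 2 * n = k + 3 := ⟨2 * n - 3, by omega⟩
  let f (i : Fin (k + 3)) : Finset.Icc 1 (2 * n) := ⟨zigzag n i, zigzag_mem_Icc (by omega)⟩
  have hinj : Injective f := fun i j hij =>
    Fin.ext (zigzag_injOn n (Set.mem_Iio.mpr (by omega)) (Set.mem_Iio.mpr (by omega))
      (congrArg Subtype.val hij))
  have hcard : Fintype.card (Fin (k + 3)) = Fintype.card (Finset.Icc 1 (2 * n)) := by
    simp only [Fintype.card_fin, Fintype.card_coe, Nat.card_Icc]
    omega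
  refine SimpleGraph.exists_isHamiltonianCycle_of_bijective f
    ((Fintype.bijective_iff_injective_and_card f).mpr ⟨hinj, hcard⟩) fun i => ?_
  obtain hlast | hlt := eq_or_ne i (Fin.last _)
  · have hsum : zigzag n i + zigzag n ↑(i + 1) = 3 := by
      rw [hlast, Fin.last_add_one, Fin.val_last, Fin.val_zero, show k + 2 = 2 * n - 1 by omega]
      exact zigzag_pred_add_zigzag_zero (by omega)
    exact primeSumGraph_adj_of_add_eq hsum Nat.prime_three (by decide)
  · have hi := Fin.val_lt_last hlt
    have hsum : zigzag n i + zigzag n ↑(i + 1) = 2 * n + 1 + 2 * (i % 2) := by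
      rw [Fin.val_add_one_of_lt hi]
      exact zigzag_add_zigzag_succ (by omega)
    refine primeSumGraph_adj_of_add_eq hsum ?_ (by omega)
    rcases Nat.mod_two_eq_zero_or_one i with h | h <;> rw [h] <;> assumption

/-- If the twin prime conjecture holds (there are infinitely many `n` with `2n+1`
and `2n+3` both prime), then there are infinitely many positive integers `n` such
that `G_{2n}` contains a Hamilton cycle. -/
theorem infinitely_many_hamiltonian_of_twin_primes
    (h : {n : ℕ | 0 < n ∧ Nat.Prime (2 * n + 1) ∧ Nat.Prime (2 * n + 3)}.Infinite) :
    {n : ℕ | 0 < n ∧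
      ∃ a, ∃ w : (primeSumGraph (2 * n)).Walk a a, w.IsHamiltonianCycle}.Infinite := by
  refine (h.sdiff (Set.finite_Iio 2)).mono ?_
  rintro n ⟨⟨hpos, h1, h3⟩, hn⟩
  exact ⟨hpos, primeSumGraph_exists_isHamiltonianCycle (not_lt.mp hn) h1 h3⟩
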